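/- arXiv:1211.3387 — 2 statements merged into one kernel-verified Lean document; each statement's English description precedes it below -/
import Mathlib

section
/- (Abstract stability inequality for gradient flows.) Let H be a real Hilbert space, U ⊆ H open, and E : U → ℝ a Fréchet differentiable function with gradient ∇E. Let t₀ < t₁ and let u : [t₀,t₁] → U be a C¹ curve with u'(t) = -∇E(u(t)) for all t ∈ [t₀,t₁]. Suppose there exist E∞ ∈ ℝ, α ∈ (0,1) and C > 0 such that for all t ∈ [t₀,t₁] one has E(u(t)) ≥ E∞ and (E(u(t)) - E∞)^{1-α/2} ≤ C·‖∇E(u(t))‖. Then for all τ₀, τ₁ with t₀ ≤ τ₀ ≤ τ₁ ≤ t₁ one has ‖u(τ₁) - u(τ₀)‖ ≤ (2C/α)·(E(u(t₀)) - E∞)^{α/2}. -/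
/-!
Put `f = E ∘ u - E∞` and `θ = α / 2`. Along the flow `f' = -‖u'‖²`, so `f` is nonincreasing,
and where `f > 0` the Łojasiewicz inequality turns this into `‖u'‖ ≤ -(C / θ) (f ^ θ)'`.
Where `f` vanishes it stays zero from then on and the flow is at rest, so the same bound holds
with both sides zero. Integrating, the length of `u` on `[τ₀, τ₁]` is at most
`(C / θ) (f τ₀ ^ θ - f τ₁ ^ θ) ≤ (C / θ) f t₀ ^ θ`.
-/

open Set Filter Topology

section GradientFlow

variable {H : Type*} [NormedAddCommGroup H] [InnerProductSpace ℝ H] [CompleteSpace H]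

theorem HasGradientAt.comp_hasDerivAt {f : H → ℝ} {g : H} {γ : ℝ → H} {v : H} {t : ℝ}
    (hf : HasGradientAt f g (γ t)) (hγ : HasDerivAt γ v t) :
    HasDerivAt (fun s => f (γ s)) (inner ℝ g v) t := by
  have h := hf.hasFDerivAt.comp_hasDerivAt t hγ
  rwa [InnerProductSpace.toDual_apply_apply] at h

theorem hasDerivAt_comp_of_hasDerivAt_neg_gradient {E : H → ℝ} {u : ℝ → H} {t : ℝ}
    (hE : DifferentiableAt ℝ E (u t)) (hu : HasDerivAt u (-gradient E (u t)) t) :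
    HasDerivAt (fun s => E (u s)) (-‖gradient E (u t)‖ ^ 2) t := by
  simpa [inner_neg_right] using hE.hasGradientAt.comp_hasDerivAt hu

end GradientFlow

section NonnegNonincreasing

variable {f f' : ℝ → ℝ} {a b : ℝ}

theorem antitoneOn_Icc_of_hasDerivAt_nonpos (hf : ∀ t ∈ Icc a b, HasDerivAt f (f' t) t)
    (hf' : ∀ t ∈ Icc a b, f' t ≤ 0) : AntitoneOn f (Icc a b) :=
  antitoneOn_of_hasDerivWithinAt_nonpos (convex_Icc a b)
    (fun t ht => (hf t ht).continuousAt.continuousWithinAt)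
    (fun t ht => (hf t (interior_subset ht)).hasDerivWithinAt)
    (fun t ht => hf' t (interior_subset ht))

theorem eventuallyEq_zero_nhdsGE_of_antitoneOn (hanti : AntitoneOn f (Icc a b))
    (hf₀ : ∀ t ∈ Icc a b, 0 ≤ f t) {x : ℝ} (hx : x ∈ Ico a b) (hfx : f x = 0) :
    f =ᶠ[𝓝[≥] x] 0 := by
  filter_upwards [Icc_mem_nhdsGE hx.2] with t ht
  have htI : t ∈ Icc a b := ⟨hx.1.trans ht.1, ht.2⟩
  exact le_antisymm ((hanti (Ico_subset_Icc_self hx) htI ht.1).trans_eq hfx) (hf₀ t htI)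

theorem hasDerivAt_eq_zero_of_eq_zero (hf : ∀ t ∈ Icc a b, HasDerivAt f (f' t) t)
    (hf' : ∀ t ∈ Icc a b, f' t ≤ 0) (hf₀ : ∀ t ∈ Icc a b, 0 ≤ f t) {x : ℝ} (hx : x ∈ Ico a b)
    (hfx : f x = 0) : f' x = 0 :=
  (uniqueDiffWithinAt_Ici x).eq_deriv _ (hf x (Ico_subset_Icc_self hx)).hasDerivWithinAt
    ((hasDerivWithinAt_const x _ 0).congr_of_eventuallyEq
      (eventuallyEq_zero_nhdsGE_of_antitoneOn (antitoneOn_Icc_of_hasDerivAt_nonpos hf hf') hf₀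
        hx hfx) hfx)

theorem hasDerivWithinAt_rpow_Ici (hf : ∀ t ∈ Icc a b, HasDerivAt f (f' t) t)
    (hf' : ∀ t ∈ Icc a b, f' t ≤ 0) (hf₀ : ∀ t ∈ Icc a b, 0 ≤ f t) {θ : ℝ} (hθ : 0 < θ)
    {x : ℝ} (hx : x ∈ Ico a b) :
    HasDerivWithinAt (fun t => f t ^ θ) (f' x * θ * f x ^ (θ - 1)) (Ici x) x := by
  rcases (hf₀ x (Ico_subset_Icc_self hx)).lt_or_eq with hpos | hzero
  · exact ((hf x (Ico_subset_Icc_self hx)).rpow_const (Or.inl hpos.ne')).hasDerivWithinAt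
  · rw [hasDerivAt_eq_zero_of_eq_zero hf hf' hf₀ hx hzero.symm, zero_mul, zero_mul]
    refine (hasDerivWithinAt_const x _ 0).congr_of_eventuallyEq ?_ (by simp [← hzero, hθ.ne'])
    filter_upwards [eventuallyEq_zero_nhdsGE_of_antitoneOn
      (antitoneOn_Icc_of_hasDerivAt_nonpos hf hf') hf₀ hx hzero.symm] with t ht
    simp [ht, hθ.ne']

end NonnegNonincreasing

theorem le_mul_sq_mul_rpow_of_rpow_le {s r C θ : ℝ} (hs : 0 < s) (hr : 0 ≤ r)
    (h : s ^ (1 - θ) ≤ C * r) : r ≤ C * r ^ 2 * s ^ (θ - 1) := by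
  have hinv : s ^ (1 - θ) * s ^ (θ - 1) = 1 := by
    rw [← Real.rpow_add hs]
    norm_num
  calc r = s ^ (1 - θ) * s ^ (θ - 1) * r := by rw [hinv, one_mul]
    _ ≤ C * r * s ^ (θ - 1) * r := by gcongr
    _ = C * r ^ 2 * s ^ (θ - 1) := by ring

theorem norm_sub_le_of_lojasiewicz {H : Type*} [NormedAddCommGroup H] [NormedSpace ℝ H]
    {γ γ' : ℝ → H} {f : ℝ → ℝ} {a b C θ : ℝ} (hab : a ≤ b) (hθ : 0 < θ)
    (hγ : ∀ t ∈ Icc a b, HasDerivAt γ (γ' t) t)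
    (hf : ∀ t ∈ Icc a b, HasDerivAt f (-‖γ' t‖ ^ 2) t) (hf₀ : ∀ t ∈ Icc a b, 0 ≤ f t)
    (hloj : ∀ t ∈ Icc a b, f t ^ (1 - θ) ≤ C * ‖γ' t‖) :
    ‖γ b - γ a‖ ≤ C / θ * (f a ^ θ - f b ^ θ) := by
  have hf' : ∀ t ∈ Icc a b, -‖γ' t‖ ^ 2 ≤ 0 := fun t _ => neg_nonpos.2 (sq_nonneg _)
  refine image_norm_le_of_norm_deriv_right_le_deriv_boundary' (f := fun t => γ t - γ a)
    (B := fun t => C / θ * (f a ^ θ - f t ^ θ)) (B' := fun t => C * ‖γ' t‖ ^ 2 * f t ^ (θ - 1))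
    ?_ (fun t ht => ((hγ t (Ico_subset_Icc_self ht)).sub_const _).hasDerivWithinAt)
    (by simp) ?_ (fun t ht => ?_) (fun t ht => ?_) (right_mem_Icc.2 hab)
  · exact fun t ht => ((hγ t ht).continuousAt.sub continuousAt_const).continuousWithinAt
  · refine continuousOn_const.mul (continuousOn_const.sub fun t ht => ?_)
    exact ((hf t ht).continuousAt.rpow_const (Or.inr hθ.le)).continuousWithinAt
  · refine (((hasDerivWithinAt_rpow_Ici hf hf' hf₀ hθ ht).const_sub (f a ^ θ)).const_mul
      (C / θ)).congr_deriv ?_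
    field_simp
  · rcases (hf₀ t (Ico_subset_Icc_self ht)).lt_or_eq with hpos | hzero
    · exact le_mul_sq_mul_rpow_of_rpow_le hpos (norm_nonneg _) (hloj t (Ico_subset_Icc_self ht))
    · have hγ' : γ' t = 0 := by
        simpa using hasDerivAt_eq_zero_of_eq_zero hf hf' hf₀ ht hzero.symm
      simp [hγ']

theorem gradient_flow_stability_inequality_general
    {H : Type*} [NormedAddCommGroup H] [InnerProductSpace ℝ H] [CompleteSpace H]
    (U : Set H) (E : H → ℝ)
    (hE : ∀ x ∈ U, DifferentiableAt ℝ E x)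
    (t₀ t₁ : ℝ)
    (u : ℝ → H)
    (hmem : ∀ t ∈ Set.Icc t₀ t₁, u t ∈ U)
    (hflow : ∀ t ∈ Set.Icc t₀ t₁, HasDerivAt u (-(gradient E (u t))) t)
    (Elim α C : ℝ) (hα : α ∈ Set.Ioo (0 : ℝ) 1) (hC : 0 < C)
    (hge : ∀ t ∈ Set.Icc t₀ t₁, Elim ≤ E (u t))
    (hloj : ∀ t ∈ Set.Icc t₀ t₁,
      (E (u t) - Elim) ^ (1 - α / 2) ≤ C * ‖gradient E (u t)‖) :
    ∀ τ₀ τ₁ : ℝ, t₀ ≤ τ₀ → τ₀ ≤ τ₁ → τ₁ ≤ t₁ →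
      ‖u τ₁ - u τ₀‖ ≤ (2 * C / α) * (E (u t₀) - Elim) ^ (α / 2) := by
  intro τ₀ τ₁ h₀ h₀₁ h₁
  have hθ : 0 < α / 2 := half_pos hα.1
  let f : ℝ → ℝ := fun t => E (u t) - Elim
  have hf : ∀ t ∈ Icc t₀ t₁, HasDerivAt f (-‖-gradient E (u t)‖ ^ 2) t := fun t ht => by
    rw [norm_neg]
    exact (hasDerivAt_comp_of_hasDerivAt_neg_gradient (hE _ (hmem t ht)) (hflow t ht)).sub_const _
  have hf₀ : ∀ t ∈ Icc t₀ t₁, 0 ≤ f t := fun t ht => sub_nonneg.2 (hge t ht)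
  have hsub : Icc τ₀ τ₁ ⊆ Icc t₀ t₁ := Icc_subset_Icc h₀ h₁
  have hτ₀ : τ₀ ∈ Icc t₀ t₁ := hsub (left_mem_Icc.2 h₀₁)
  have hτ₁ : τ₁ ∈ Icc t₀ t₁ := hsub (right_mem_Icc.2 h₀₁)
  have hlength := norm_sub_le_of_lojasiewicz h₀₁ hθ (fun t ht => hflow t (hsub ht))
    (fun t ht => hf t (hsub ht)) (fun t ht => hf₀ t (hsub ht))
    (fun t ht => (norm_neg (gradient E (u t))).symm ▸ hloj t (hsub ht))
  have hdecay : f τ₀ ≤ f t₀ :=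
    antitoneOn_Icc_of_hasDerivAt_nonpos hf (fun t _ => neg_nonpos.2 (sq_nonneg _))
      (left_mem_Icc.2 (h₀.trans hτ₀.2)) hτ₀ h₀
  have hcoef : 0 ≤ C / (α / 2) := div_nonneg hC.le hθ.le
  calc ‖u τ₁ - u τ₀‖ ≤ C / (α / 2) * (f τ₀ ^ (α / 2) - f τ₁ ^ (α / 2)) := hlength
    _ ≤ C / (α / 2) * f τ₀ ^ (α / 2) := by
      gcongr
      exact sub_le_self _ (Real.rpow_nonneg (hf₀ τ₁ hτ₁) _)
    _ ≤ C / (α / 2) * f t₀ ^ (α / 2) := by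
      gcongr
      exact hf₀ τ₀ hτ₀
    _ = 2 * C / α * (E (u t₀) - Elim) ^ (α / 2) := by
      rw [div_div_eq_mul_div]
      ring

/-- Abstract stability inequality for gradient flows in a Hilbert space.
If `u : [t₀,t₁] → U` is a C¹ negative gradient flow trajectory of a Fréchet differentiable
function `E` on an open set `U` of a real Hilbert space, `E(u(t)) ≥ Elim`, and the
Łojasiewicz inequality `(E(u t) - Elim)^(1-α/2) ≤ C‖∇E(u t)‖` holds on `[t₀,t₁]`, then
`‖u τ₁ - u τ₀‖ ≤ (2C/α)(E(u t₀) - Elim)^(α/2)` for all `t₀ ≤ τ₀ ≤ τ₁ ≤ t₁`. -/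
theorem gradient_flow_stability_inequality
    {H : Type*} [NormedAddCommGroup H] [InnerProductSpace ℝ H] [CompleteSpace H]
    (U : Set H) (hU : IsOpen U) (E : H → ℝ)
    (hE : ∀ x ∈ U, DifferentiableAt ℝ E x)
    (t₀ t₁ : ℝ) (ht : t₀ < t₁)
    (u : ℝ → H)
    (hmem : ∀ t ∈ Set.Icc t₀ t₁, u t ∈ U)
    (hflow : ∀ t ∈ Set.Icc t₀ t₁, HasDerivAt u (-(gradient E (u t))) t)
    (hC1 : ContinuousOn (fun t => gradient E (u t)) (Set.Icc t₀ t₁))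
    (Elim α C : ℝ) (hα : α ∈ Set.Ioo (0 : ℝ) 1) (hC : 0 < C)
    (hge : ∀ t ∈ Set.Icc t₀ t₁, Elim ≤ E (u t))
    (hloj : ∀ t ∈ Set.Icc t₀ t₁,
      (E (u t) - Elim) ^ (1 - α / 2) ≤ C * ‖gradient E (u t)‖) :
    ∀ τ₀ τ₁ : ℝ, t₀ ≤ τ₀ → τ₀ ≤ τ₁ → τ₁ ≤ t₁ →
      ‖u τ₁ - u τ₀‖ ≤ (2 * C / α) * (E (u t₀) - Elim) ^ (α / 2) :=
  gradient_flow_stability_inequality_general U E hE t₀ t₁ u hmem hflow Elim α C hα hC hge hloj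
end

section
/- (Generalized stability inequality with interpolation exponent.) Let X be a real normed vector space, t₀ < t₁, let u : [t₀,t₁] → X be C¹, let E : [t₀,t₁] → ℝ be differentiable, and let G : [t₀,t₁] → [0,∞) be a function. Let α ∈ (0,1), η ∈ ((1-α)/(1-α/2), 1], C > 0, K > 0 and E∞ ∈ ℝ, and assume that for all t ∈ [t₀,t₁]: (i) E(t) ≥ E∞; (ii) E'(t) ≤ -G(t)²; (iii) ‖u'(t)‖ ≤ K·G(t)^η; (iv) (E(t) - E∞)^{1-α/2} ≤ C·G(t). Set θ = η + α - αη/2 - 1; then θ > 0 and for all τ₀, τ₁ with t₀ ≤ τ₀ ≤ τ₁ ≤ t₁ one has ‖u(τ₁) - u(τ₀)‖ ≤ (K/θ)·C^{(1-θ)/(1-α/2)}·(E(t₀) - E∞)^θ. -/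
open Set

/-- Auxiliary version of the stability inequality with an abstract Łojasiewicz exponent
`β` and an abstract power `θ` related by `β * (2 - η) = 1 - θ`. -/
lemma stability_aux
    {X : Type*} [NormedAddCommGroup X] [NormedSpace ℝ X]
    (t₀ t₁ : ℝ) (ht : t₀ ≤ t₁)
    (u : ℝ → X) (u' : ℝ → X)
    (hu : ∀ t ∈ Set.Icc t₀ t₁, HasDerivAt u (u' t) t)
    (E : ℝ → ℝ) (E' : ℝ → ℝ)
    (hE : ∀ t ∈ Set.Icc t₀ t₁, HasDerivAt E (E' t) t)
    (G : ℝ → ℝ) (hG : ∀ t ∈ Set.Icc t₀ t₁, 0 ≤ G t)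
    (β η C K Elim θ : ℝ)
    (hβ : 0 < β) (hηpos : 0 < η) (hη2 : η ≤ 2)
    (hθpos : 0 < θ) (hrel : β * (2 - η) = 1 - θ)
    (hC : 0 < C) (hK : 0 < K)
    (h1 : ∀ t ∈ Set.Icc t₀ t₁, Elim ≤ E t)
    (h2 : ∀ t ∈ Set.Icc t₀ t₁, E' t ≤ -(G t ^ 2))
    (h3 : ∀ t ∈ Set.Icc t₀ t₁, ‖u' t‖ ≤ K * G t ^ η)
    (h4 : ∀ t ∈ Set.Icc t₀ t₁, (E t - Elim) ^ β ≤ C * G t) :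
    ∀ τ₀ τ₁ : ℝ, t₀ ≤ τ₀ → τ₀ ≤ τ₁ → τ₁ ≤ t₁ →
      ‖u τ₁ - u τ₀‖ ≤ K / θ * C ^ (2 - η) * (E t₀ - Elim) ^ θ := by
  intro τ₀ τ₁ hτ₀ hτ01 hτ₁
  have h2η : (0:ℝ) ≤ 2 - η := by linarith
  set M := K / θ * C ^ (2 - η) with hMdef
  have hCpow : 0 < C ^ (2 - η) := Real.rpow_pos_of_pos hC _
  have hM : 0 < M := by
    rw [hMdef]; positivity
  have hMθ : M * θ = K * C ^ (2 - η) := by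
    rw [hMdef]; field_simp
  have hucont : ContinuousOn u (Icc t₀ t₁) :=
    fun t htx => (hu t htx).continuousAt.continuousWithinAt
  have hEcont : ContinuousOn E (Icc t₀ t₁) :=
    fun t htx => (hE t htx).continuousAt.continuousWithinAt
  have hE0 : ∀ t ∈ Icc t₀ t₁, 0 ≤ E t - Elim := fun t htx => sub_nonneg.2 (h1 t htx)
  have hEanti : AntitoneOn E (Icc t₀ t₁) := by
    apply antitoneOn_of_deriv_nonpos (convex_Icc t₀ t₁) hEcont
    · intro x hx
      rw [interior_Icc] at hx
      exact ((hE x (Ioo_subset_Icc_self hx)).differentiableAt).differentiableWithinAt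
    · intro x hx
      rw [interior_Icc] at hx
      have hx' := Ioo_subset_Icc_self hx
      rw [(hE x hx').deriv]
      nlinarith [h2 x hx', sq_nonneg (G x)]
  -- pointwise bound where E > Elim
  have hbound : ∀ x ∈ Icc t₀ t₁, Elim < E x →
      ‖u' x‖ ≤ -(M * (E' x * θ * (E x - Elim) ^ (θ - 1))) := by
    intro x hx hEx
    have he : 0 < E x - Elim := sub_pos.2 hEx
    have h4x := h4 x hx
    have hgnn := hG x hx
    have hg : 0 < G x := by
      rcases lt_or_eq_of_le hgnn with h | h
      · exact h
      · exfalso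
        have hp := Real.rpow_pos_of_pos he β
        rw [← h, mul_zero] at h4x
        linarith
    have key : (E x - Elim) ^ (1 - θ) ≤ C ^ (2 - η) * G x ^ (2 - η) := by
      have e1 : (E x - Elim) ^ (1 - θ) = ((E x - Elim) ^ β) ^ (2 - η) := by
        rw [← Real.rpow_mul he.le, hrel]
      rw [e1, ← Real.mul_rpow hC.le hgnn]
      exact Real.rpow_le_rpow (Real.rpow_nonneg he.le _) h4x h2η
    have hepow : 0 < (E x - Elim) ^ (θ - 1) := Real.rpow_pos_of_pos he _
    have hone : 1 ≤ C ^ (2 - η) * G x ^ (2 - η) * (E x - Elim) ^ (θ - 1) := by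
      have h6 := mul_le_mul_of_nonneg_right key hepow.le
      rwa [← Real.rpow_add he, show (1 - θ) + (θ - 1) = 0 by ring, Real.rpow_zero] at h6
    have hg2 : G x ^ η * G x ^ (2 - η) = G x ^ 2 := by
      rw [← Real.rpow_add hg, show η + (2 - η) = (2:ℝ) by ring,
        show (2:ℝ) = ((2:ℕ):ℝ) by norm_num, Real.rpow_natCast]
    have hgη : 0 < G x ^ η := Real.rpow_pos_of_pos hg _
    have step1 : K * G x ^ η ≤ K * C ^ (2 - η) * ((E x - Elim) ^ (θ - 1) * G x ^ 2) := by
      have h7 := mul_le_mul_of_nonneg_left hone hgη.le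
      rw [mul_one] at h7
      calc K * G x ^ η
          ≤ K * (G x ^ η * (C ^ (2 - η) * G x ^ (2 - η) * (E x - Elim) ^ (θ - 1))) :=
            mul_le_mul_of_nonneg_left h7 hK.le
        _ = K * C ^ (2 - η) * ((E x - Elim) ^ (θ - 1) * (G x ^ η * G x ^ (2 - η))) := by ring
        _ = K * C ^ (2 - η) * ((E x - Elim) ^ (θ - 1) * G x ^ 2) := by rw [hg2]
    have step2 : (E x - Elim) ^ (θ - 1) * G x ^ 2 ≤ (E x - Elim) ^ (θ - 1) * (-(E' x)) := by
      apply mul_le_mul_of_nonneg_left _ hepow.le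
      linarith [h2 x hx]
    have final : -(M * (E' x * θ * (E x - Elim) ^ (θ - 1)))
        = K * C ^ (2 - η) * ((E x - Elim) ^ (θ - 1) * (-(E' x))) := by
      rw [← hMθ]; ring
    rw [final]
    calc ‖u' x‖ ≤ K * G x ^ η := h3 x hx
      _ ≤ K * C ^ (2 - η) * ((E x - Elim) ^ (θ - 1) * G x ^ 2) := step1
      _ ≤ K * C ^ (2 - η) * ((E x - Elim) ^ (θ - 1) * (-(E' x))) :=
          mul_le_mul_of_nonneg_left step2 (by positivity)
  -- core comparison lemma
  have core : ∀ a b : ℝ, t₀ ≤ a → a ≤ b → b ≤ t₁ →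
      (∀ t ∈ Ico a b, Elim < E t) →
      ‖u b - u a‖ ≤ M * (E a - Elim) ^ θ - M * (E b - Elim) ^ θ := by
    intro a b ha hab hb hpos
    have hsub : Icc a b ⊆ Icc t₀ t₁ := Icc_subset_Icc ha hb
    have hsub' : Ico a b ⊆ Icc t₀ t₁ := fun t htx => hsub (Ico_subset_Icc_self htx)
    have hf : ContinuousOn (fun t => u t - u a) (Icc a b) :=
      (hucont.mono hsub).sub continuousOn_const
    have hf' : ∀ x ∈ Ico a b, HasDerivWithinAt (fun t => u t - u a) (u' x) (Ici x) x := by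
      intro x hx
      exact ((hu x (hsub' hx)).sub_const (u a)).hasDerivWithinAt
    have ha0 : ‖(fun t => u t - u a) a‖ ≤
        (fun t => M * (E a - Elim) ^ θ - M * (E t - Elim) ^ θ) a := by simp
    have hB : ContinuousOn (fun t => M * (E a - Elim) ^ θ - M * (E t - Elim) ^ θ) (Icc a b) := by
      apply continuousOn_const.sub
      apply ContinuousOn.mul continuousOn_const
      apply ContinuousOn.rpow_const ((hEcont.mono hsub).sub continuousOn_const)
      intro t htx
      exact Or.inr hθpos.le
    have hB' : ∀ x ∈ Ico a b,
        HasDerivWithinAt (fun t => M * (E a - Elim) ^ θ - M * (E t - Elim) ^ θ)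
          (-(M * (E' x * θ * (E x - Elim) ^ (θ - 1)))) (Ici x) x := by
      intro x hx
      have hne : E x - Elim ≠ 0 := (sub_pos.2 (hpos x hx)).ne'
      have h5 : HasDerivAt (fun t => (E t - Elim) ^ θ)
          (E' x * θ * (E x - Elim) ^ (θ - 1)) x :=
        ((hE x (hsub' hx)).sub_const Elim).rpow_const (Or.inl hne)
      exact (((h5.const_mul M).const_sub (M * (E a - Elim) ^ θ)).hasDerivWithinAt).congr_deriv
        (by ring)
    have bound : ∀ x ∈ Ico a b, ‖u' x‖ ≤ -(M * (E' x * θ * (E x - Elim) ^ (θ - 1))) :=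
      fun x hx => hbound x (hsub' hx) (hpos x hx)
    have key := image_norm_le_of_norm_deriv_right_le_deriv_boundary'
      hf hf' ha0 hB hB' bound (right_mem_Icc.2 hab)
    simpa using key
  -- assemble
  have memI : ∀ s, τ₀ ≤ s → s ≤ τ₁ → s ∈ Icc t₀ t₁ :=
    fun s h h' => ⟨le_trans hτ₀ h, le_trans h' hτ₁⟩
  have ht0 : t₀ ∈ Icc t₀ t₁ := left_mem_Icc.2 ht
  have hτ₀I : τ₀ ∈ Icc t₀ t₁ := memI τ₀ le_rfl hτ01
  have hτ₁I : τ₁ ∈ Icc t₀ t₁ := memI τ₁ hτ01 le_rfl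
  have hmonoE : (E τ₀ - Elim) ^ θ ≤ (E t₀ - Elim) ^ θ :=
    Real.rpow_le_rpow (hE0 τ₀ hτ₀I)
      (by have := hEanti ht0 hτ₀I hτ₀; linarith) hθpos.le
  have hfin : ‖u τ₁ - u τ₀‖ ≤ M * (E τ₀ - Elim) ^ θ := by
    by_cases hA : ∀ t ∈ Ico τ₀ τ₁, Elim < E t
    · have hcore := core τ₀ τ₁ hτ₀ hτ01 hτ₁ hA
      have h0 : 0 ≤ (E τ₁ - Elim) ^ θ := Real.rpow_nonneg (hE0 τ₁ hτ₁I) _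
      nlinarith
    · push_neg at hA
      obtain ⟨w, hw, hwE⟩ := hA
      set S : Set ℝ := {t ∈ Icc τ₀ τ₁ | E t ≤ Elim} with hSdef
      have hScl : IsClosed S :=
        ContinuousOn.preimage_isClosed_of_isClosed
          (hEcont.mono (Icc_subset_Icc hτ₀I.1 hτ₁I.2)) isClosed_Icc isClosed_Iic
      have hwS : w ∈ S := ⟨Ico_subset_Icc_self hw, hwE⟩
      have hSne : S.Nonempty := ⟨w, hwS⟩
      have hSbdd : BddBelow S := ⟨τ₀, fun t htS => htS.1.1⟩
      set c := sInf S with hcdef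
      have hcS : c ∈ S := hScl.csInf_mem hSne hSbdd
      have hcI : c ∈ Icc τ₀ τ₁ := hcS.1
      have hcIt : c ∈ Icc t₀ t₁ := memI c hcI.1 hcI.2
      have hcE : E c = Elim := le_antisymm hcS.2 (h1 c hcIt)
      have hclt : c < τ₁ := lt_of_le_of_lt (csInf_le hSbdd hwS) hw.2
      have hEflat : ∀ s ∈ Icc c τ₁, E s = Elim := by
        intro s hs
        have hsI : s ∈ Icc t₀ t₁ := memI s (le_trans hcI.1 hs.1) hs.2
        have h8 := hEanti hcIt hsI hs.1
        have h9 := h1 s hsI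
        rw [hcE] at h8
        linarith
      have hpre : ∀ t ∈ Ico τ₀ c, Elim < E t := by
        intro t htx
        by_contra hcon
        push_neg at hcon
        have : c ≤ t := csInf_le hSbdd ⟨⟨htx.1, le_trans htx.2.le hcI.2⟩, hcon⟩
        linarith [htx.2]
      have part1 : ‖u c - u τ₀‖ ≤ M * (E τ₀ - Elim) ^ θ := by
        have hcore := core τ₀ c hτ₀ hcI.1 (le_trans hcI.2 hτ₁) hpre
        have h0 : 0 ≤ (E c - Elim) ^ θ := Real.rpow_nonneg (hE0 c hcIt) _
        nlinarith
      have hzero : ∀ x ∈ Ico c τ₁, ‖u' x‖ ≤ 0 := by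
        intro x hx
        have hxI : x ∈ Icc t₀ t₁ := memI x (le_trans hcI.1 hx.1) hx.2.le
        have hflat : E =ᶠ[nhdsWithin x (Ioi x)] fun _ => Elim := by
          filter_upwards [Ioo_mem_nhdsGT_of_mem ⟨le_refl x, hx.2⟩] with s hs
          exact hEflat s ⟨le_trans hx.1 hs.1.le, hs.2.le⟩
        have hd1 : HasDerivWithinAt E (E' x) (Ioi x) x := (hE x hxI).hasDerivWithinAt
        have hd2 : HasDerivWithinAt E 0 (Ioi x) x :=
          (hasDerivWithinAt_const x (Ioi x) Elim).congr_of_eventuallyEq hflat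
            (hEflat x ⟨hx.1, hx.2.le⟩)
        have hE'x : E' x = 0 := by
          have e1 := hd1.derivWithin (uniqueDiffWithinAt_Ioi x)
          have e2 := hd2.derivWithin (uniqueDiffWithinAt_Ioi x)
          rw [e1] at e2; exact e2
        have hGx : G x = 0 := by
          have hh := h2 x hxI
          rw [hE'x] at hh
          nlinarith [hG x hxI, sq_nonneg (G x)]
        have h3x := h3 x hxI
        rw [hGx, Real.zero_rpow hηpos.ne', mul_zero] at h3x
        exact h3x
      have part2 : ‖u τ₁ - u c‖ ≤ 0 := by
        have h10 := norm_image_sub_le_of_norm_deriv_right_le_segment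
          (hucont.mono (Icc_subset_Icc hcIt.1 hτ₁))
          (fun x hx => (hu x (memI x (le_trans hcI.1 hx.1) hx.2.le)).hasDerivWithinAt)
          hzero τ₁ (right_mem_Icc.2 hclt.le)
        simpa using h10
      calc ‖u τ₁ - u τ₀‖ ≤ ‖u τ₁ - u c‖ + ‖u c - u τ₀‖ :=
            norm_sub_le_norm_sub_add_norm_sub _ _ _
        _ ≤ 0 + M * (E τ₀ - Elim) ^ θ := add_le_add part2 part1
        _ = M * (E τ₀ - Elim) ^ θ := by ring
  calc ‖u τ₁ - u τ₀‖ ≤ M * (E τ₀ - Elim) ^ θ := hfin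
    _ ≤ M * (E t₀ - Elim) ^ θ := mul_le_mul_of_nonneg_left hmonoE hM.le
    _ = K / θ * C ^ (2 - η) * (E t₀ - Elim) ^ θ := by rw [hMdef]

/-- Generalized stability inequality with interpolation exponent.
With `E' ≤ -G²` (energy monotonicity), `‖u'‖ ≤ K·G^η` (interpolation) and the
Łojasiewicz inequality `(E - Elim)^(1-α/2) ≤ C·G`, setting `θ = η + α - αη/2 - 1` one
has `θ > 0` and `‖u τ₁ - u τ₀‖ ≤ (K/θ)·C^((1-θ)/(1-α/2))·(E t₀ - Elim)^θ`. -/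
theorem generalized_stability_inequality
    {X : Type*} [NormedAddCommGroup X] [NormedSpace ℝ X]
    (t₀ t₁ : ℝ) (ht : t₀ < t₁)
    (u : ℝ → X) (u' : ℝ → X)
    (hu : ∀ t ∈ Set.Icc t₀ t₁, HasDerivAt u (u' t) t)
    (hu' : ContinuousOn u' (Set.Icc t₀ t₁))
    (E : ℝ → ℝ) (E' : ℝ → ℝ)
    (hE : ∀ t ∈ Set.Icc t₀ t₁, HasDerivAt E (E' t) t)
    (G : ℝ → ℝ) (hG : ∀ t ∈ Set.Icc t₀ t₁, 0 ≤ G t)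
    (α η C K Elim : ℝ)
    (hα : α ∈ Set.Ioo (0 : ℝ) 1)
    (hη : η ∈ Set.Ioc ((1 - α) / (1 - α / 2)) 1)
    (hC : 0 < C) (hK : 0 < K)
    (h1 : ∀ t ∈ Set.Icc t₀ t₁, Elim ≤ E t)
    (h2 : ∀ t ∈ Set.Icc t₀ t₁, E' t ≤ -(G t ^ 2))
    (h3 : ∀ t ∈ Set.Icc t₀ t₁, ‖u' t‖ ≤ K * G t ^ η)
    (h4 : ∀ t ∈ Set.Icc t₀ t₁, (E t - Elim) ^ (1 - α / 2) ≤ C * G t) :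
    0 < η + α - α * η / 2 - 1 ∧
    ∀ τ₀ τ₁ : ℝ, t₀ ≤ τ₀ → τ₀ ≤ τ₁ → τ₁ ≤ t₁ →
      ‖u τ₁ - u τ₀‖ ≤
        (K / (η + α - α * η / 2 - 1)) *
          C ^ ((1 - (η + α - α * η / 2 - 1)) / (1 - α / 2)) *
            (E t₀ - Elim) ^ (η + α - α * η / 2 - 1) := by
  obtain ⟨hα0, hα1⟩ := hα
  obtain ⟨hη1, hη2⟩ := hη
  have hα2 : 0 < 1 - α / 2 := by linarith
  have hηpos : 0 < η := lt_trans (div_pos (by linarith) hα2) hη1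
  have hθpos : 0 < η + α - α * η / 2 - 1 := by
    nlinarith [(div_lt_iff₀ hα2).mp hη1]
  have hexp : (1 - (η + α - α * η / 2 - 1)) / (1 - α / 2) = 2 - η := by
    rw [div_eq_iff hα2.ne']; ring
  refine ⟨hθpos, ?_⟩
  have haux := stability_aux t₀ t₁ ht.le u u' hu E E' hE G hG
    (1 - α / 2) η C K Elim (η + α - α * η / 2 - 1)
    hα2 hηpos (by linarith) hθpos (by ring) hC hK h1 h2 h3 h4
  intro τ₀ τ₁ hτ₀ hτ01 hτ₁
  rw [hexp]
  exact haux τ₀ τ₁ hτ₀ hτ01 hτ₁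
end
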